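/- Let n ≥ 2 and let Ψ: [0,∞) → ℝ be any function. Then the function W: GL⁺(n) → ℝ defined by W(F) = Ψ(‖dev_n log U‖²), where U = √(FᵀF), is tension-compression symmetric and isochoric, i.e. W(F⁻¹) = W(F) and W(a·F) = W(F) for all F ∈ GL⁺(n) and all a > 0; in particular W(F) = W(F/(det F)^{1/n}) for all F ∈ GL⁺(n). -/

import Mathlib

open Matrix Real

attribute [local instance] Matrix.frobeniusNormedAddCommGroup Matrix.frobeniusNormedSpace

noncomputable section

/-- The space of real `n × n` matrices. -/
abbrev Mat (n : ℕ) := Matrix (Fin n) (Fin n) ℝ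

/-- `GL⁺(n)`: real `n × n` matrices with positive determinant. -/
def GLp (n : ℕ) : Set (Mat n) := {F | 0 < F.det}

/-- Frobenius inner product `⟨X, Y⟩ = tr (X Yᵀ)`. -/
def inn {n : ℕ} (X Y : Mat n) : ℝ := (X * Yᵀ).trace

/-- Squared Frobenius norm `‖X‖² = tr (Xᵀ X)`. -/
def nsq {n : ℕ} (X : Mat n) : ℝ := (Xᵀ * X).trace

/-- The primary matrix function associated to `f : ℝ → ℝ`: applies `f` to the eigenvalues
in a spectral decomposition of a Hermitian (i.e. real symmetric) matrix, junk value `0`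
otherwise. -/
def matFun {n : ℕ} (f : ℝ → ℝ) (A : Mat n) : Mat n :=
  if hA : A.IsHermitian then
    (hA.eigenvectorUnitary : Mat n) * Matrix.diagonal (f ∘ hA.eigenvalues) *
      (star (hA.eigenvectorUnitary : Mat n))
  else 0

/-- Principal square root of a symmetric positive semidefinite matrix. -/
def matSqrt {n : ℕ} (A : Mat n) : Mat n := matFun Real.sqrt A

/-- Principal matrix logarithm of a symmetric positive definite matrix. -/
def matLog {n : ℕ} (A : Mat n) : Mat n := matFun Real.log A

/-- `log U` where `U = √(FᵀF)` is the right stretch tensor of `F`. -/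
def logU {n : ℕ} (F : Mat n) : Mat n := matLog (matSqrt (Fᵀ * F))

/-- `log V` where `V = √(FFᵀ)` is the left stretch tensor of `F`. -/
def logV {n : ℕ} (F : Mat n) : Mat n := matLog (matSqrt (F * Fᵀ))

/-- Deviatoric (trace-free) part `dev_n X = X - (tr X / n) 𝟙`. -/
def dev {n : ℕ} (X : Mat n) : Mat n := X - (X.trace / n) • (1 : Mat n)

/-- Rank-one convexity of `W : GL⁺(n) → ℝ`: along every rank-one line segment contained in
`GL⁺(n)`, the function is convex. -/
def RankOneConvex {n : ℕ} (W : Mat n → ℝ) : Prop :=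
  ∀ F ∈ GLp n, ∀ ξ η : Fin n → ℝ, ∀ I : Set ℝ, Convex ℝ I →
    (∀ t ∈ I, 0 < (F + t • vecMulVec ξ η).det) →
    ConvexOn ℝ I (fun t => W (F + t • vecMulVec ξ η))

end

/-!
Via the continuous functional calculus, `log U = g (FᵀF)` with `g x = log √x`. Replacing `F`
by `a • F` (`a > 0`) multiplies `FᵀF` by `a²`, which adds `(log a) • 𝟙` to `log U` because
the spectrum of `FᵀF` is positive, and `dev` annihilates multiples of `𝟙`. Replacing `F` by
`F⁻¹` replaces `FᵀF` by `(FFᵀ)⁻¹`, and `g (x⁻¹) = -g x`, so `log U (F⁻¹) = -log V (F)`.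
Finally `FFᵀ` and `FᵀF` have the same characteristic polynomial, hence the same eigenvalues,
so `log V` and `log U` are orthogonally conjugate, and `‖dev ·‖²` is invariant under
orthogonal conjugation.
-/
open Unitary

theorem trace_conjStarAlgAut {R ι : Type*} [CommRing R] [StarRing R] [Fintype ι] [DecidableEq ι]
    (u : unitary (Matrix ι ι R)) (X : Matrix ι ι R) :
    (conjStarAlgAut R _ u X).trace = X.trace := by
  rw [conjStarAlgAut_apply, trace_mul_cycle, coe_star_mul_self, Matrix.one_mul]

theorem isHermitian_transpose_mul_self {m ι : Type*} [Fintype m] (F : Matrix m ι ℝ) :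
    (Fᵀ * F).IsHermitian := by
  simpa using isHermitian_conjTranspose_mul_self F

theorem isHermitian_mul_transpose_self {m ι : Type*} [Fintype ι] (F : Matrix m ι ℝ) :
    (F * Fᵀ).IsHermitian := by
  simpa using isHermitian_mul_conjTranspose_self F

section

variable {n : ℕ}

theorem matFun_eq_cfc {A : Mat n} (hA : A.IsHermitian) (f : ℝ → ℝ) :
    matFun f A = cfc f A := by
  rw [matFun, dif_pos hA, hA.cfc_eq, IsHermitian.cfc, conjStarAlgAut_apply]
  rfl

theorem continuousOn_image_spectrum (A : Mat n) (f g : ℝ → ℝ) :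
    ContinuousOn g (f '' spectrum ℝ A) :=
  (A.finite_real_spectrum.image f).continuousOn g

theorem matLog_matSqrt {A : Mat n} (hA : A.IsHermitian) :
    matLog (matSqrt A) = cfc (fun x => log √x) A := by
  have hS : (cfc sqrt A).IsHermitian := cfc_predicate sqrt A
  rw [matLog, matSqrt, matFun_eq_cfc hA, matFun_eq_cfc hS,
    cfc_comp' log sqrt A (continuousOn_image_spectrum _ _ _)]

theorem pos_of_mem_spectrum_transpose_mul_self {F : Mat n} (hF : F.det ≠ 0) {x : ℝ}
    (hx : x ∈ spectrum ℝ (Fᵀ * F)) : 0 < x := by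
  have hpd : (Fᵀ * F).PosDef := by
    simpa using PosDef.conjTranspose_mul_self F
      (mulVec_injective_iff_isUnit.mpr ((isUnit_iff_isUnit_det F).mpr hF.isUnit))
  rw [hpd.isHermitian.spectrum_real_eq_range_eigenvalues] at hx
  obtain ⟨i, rfl⟩ := hx
  exact hpd.eigenvalues_pos i

theorem logU_smul {F : Mat n} (hF : F.det ≠ 0) {a : ℝ} (ha : 0 < a) :
    logU (a • F) = log a • 1 + logU F := by
  have hA := isHermitian_transpose_mul_self F
  rw [logU, logU, matLog_matSqrt (isHermitian_transpose_mul_self _), matLog_matSqrt hA,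
    transpose_smul, smul_mul_smul_comm, ← cfc_comp_smul (a * a) (fun x => log √x) (Fᵀ * F)
      (continuousOn_image_spectrum _ _ _) hA.isSelfAdjoint,
    ← Algebra.algebraMap_eq_smul_one, ← cfc_const_add _ _ _
      ((Fᵀ * F).finite_real_spectrum.continuousOn _) hA.isSelfAdjoint]
  refine cfc_congr fun x hx => ?_
  have hx₀ : 0 < √x := sqrt_pos.mpr (pos_of_mem_spectrum_transpose_mul_self hF hx)
  rw [smul_eq_mul, sqrt_mul (mul_self_nonneg a), sqrt_mul_self ha.le, log_mul ha.ne' hx₀.ne']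

theorem logU_inv {F : Mat n} (hF : F.det ≠ 0) : logU F⁻¹ = -logV F := by
  have hB := isHermitian_mul_transpose_self F
  have hFFt : IsUnit (F * Fᵀ) := by
    rw [isUnit_iff_isUnit_det, det_mul, det_transpose]
    exact (mul_ne_zero hF hF).isUnit
  rw [logU, logV, matLog_matSqrt hB, transpose_nonsing_inv, ← Matrix.mul_inv_rev,
    matLog_matSqrt hB.inv, nonsing_inv_eq_ringInverse,
    ← cfc_ringInverse_id (R := ℝ) _ hFFt hB.isSelfAdjoint,
    ← cfc_comp' _ _ _ (continuousOn_image_spectrum _ _ _)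
      ((F * Fᵀ).finite_real_spectrum.continuousOn _), ← cfc_neg]
  congr 1
  funext x
  rw [sqrt_inv, log_inv]

theorem cfc_eq_conjStarAlgAut_of_eigenvalues_eq {A B : Mat n} (hA : A.IsHermitian)
    (hB : B.IsHermitian) (h : hA.eigenvalues = hB.eigenvalues) (f : ℝ → ℝ) :
    ∃ u : unitary (Mat n), cfc f B = conjStarAlgAut ℝ _ u (cfc f A) := by
  refine ⟨hB.eigenvectorUnitary * star hA.eigenvectorUnitary, ?_⟩
  rw [hA.cfc_eq, hB.cfc_eq, IsHermitian.cfc, IsHermitian.cfc, h, conjStarAlgAut_mul_apply,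
    ← conjStarAlgAut_mul_apply (u₁ := star _)]
  simp

theorem nsq_eq_trace_star_mul (X : Mat n) : nsq X = (star X * X).trace := by
  rw [nsq, star_eq_conjTranspose, conjTranspose_eq_transpose_of_trivial]

theorem nsq_dev_conjStarAlgAut (u : unitary (Mat n)) (X : Mat n) :
    nsq (dev (conjStarAlgAut ℝ _ u X)) = nsq (dev X) := by
  have hdev : dev (conjStarAlgAut ℝ _ u X) = conjStarAlgAut ℝ _ u (dev X) := by
    rw [dev, dev, trace_conjStarAlgAut, map_sub, map_smul, map_one]
  rw [hdev, nsq_eq_trace_star_mul, nsq_eq_trace_star_mul, ← map_star, ← map_mul,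
    trace_conjStarAlgAut]

theorem nsq_dev_logV (F : Mat n) : nsq (dev (logV F)) = nsq (dev (logU F)) := by
  have hA := isHermitian_transpose_mul_self F
  have hB := isHermitian_mul_transpose_self F
  obtain ⟨u, hu⟩ := cfc_eq_conjStarAlgAut_of_eigenvalues_eq hA hB
    ((hA.eigenvalues_eq_eigenvalues_iff hB).mpr (charpoly_mul_comm _ _)) (fun x => log √x)
  rw [logU, logV, matLog_matSqrt hA, matLog_matSqrt hB, hu, nsq_dev_conjStarAlgAut]

theorem dev_smul_one_add (c : ℝ) (X : Mat n) : dev (c • 1 + X) = dev X := by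
  rcases Nat.eq_zero_or_pos n with rfl | hn
  · exact Subsingleton.elim _ _
  have hn' : (n : ℝ) ≠ 0 := by positivity
  rw [dev, dev, trace_add, trace_smul, trace_one, Fintype.card_fin, smul_eq_mul, add_div,
    mul_div_cancel_right₀ _ hn', add_smul]
  abel

theorem dev_neg (X : Mat n) : dev (-X) = -dev X := by
  rw [dev, dev, trace_neg, neg_div, neg_smul]
  abel

theorem nsq_neg (X : Mat n) : nsq (-X) = nsq X := by
  simp [nsq]

end

theorem devLog_energy_isochoric_tc_symmetric_general
    (n : ℕ) (Ψ : ℝ → ℝ)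
    (W : Mat n → ℝ) (hW : ∀ F : Mat n, W F = Ψ (nsq (dev (logU F)))) :
    ∀ F ∈ GLp n, W F⁻¹ = W F ∧
      (∀ a : ℝ, 0 < a → W (a • F) = W F) ∧
      W ((F.det ^ (1 / (n : ℝ)))⁻¹ • F) = W F := by
  intro F hF
  have hscale : ∀ a : ℝ, 0 < a → W (a • F) = W F := fun a ha => by
    rw [hW, hW, logU_smul hF.ne' ha, dev_smul_one_add]
  refine ⟨?_, hscale, hscale _ (inv_pos.mpr (rpow_pos_of_pos hF _))⟩
  rw [hW, hW, logU_inv hF.ne', dev_neg, nsq_neg, nsq_dev_logV]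

/-- Every function of the form `W(F) = Ψ(‖dev_n log U‖²)` (with `U = √(FᵀF)`) is
tension-compression symmetric and isochoric: `W(F⁻¹) = W(F)` and `W(aF) = W(F)` for all
`F ∈ GL⁺(n)` and `a > 0`; in particular `W(F) = W(F / (det F)^{1/n})`. -/
theorem devLog_energy_isochoric_tc_symmetric
    (n : ℕ) (hn : 2 ≤ n) (Ψ : ℝ → ℝ)
    (W : Mat n → ℝ) (hW : ∀ F : Mat n, W F = Ψ (nsq (dev (logU F)))) :
    ∀ F ∈ GLp n, W F⁻¹ = W F ∧
      (∀ a : ℝ, 0 < a → W (a • F) = W F) ∧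
      W ((F.det ^ (1 / (n : ℝ)))⁻¹ • F) = W F :=
  devLog_energy_isochoric_tc_symmetric_general n Ψ W hW
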